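/- arXiv:1702.04577 — 2 statements merged into one kernel-verified Lean document; each statement's English description precedes it below -/
import Mathlib

section
/- Let n ≥ 1 and m > 2, and let f be a clustering function defined on the distance functions on the set S = {1,…,n+2} that are realizable in ℝ^m. If f satisfies scale-invariance and consistency (with respect to rescalings and Γ-transformations that stay within the realizable distance functions), then f cannot return the partition Γ1 = {{1,…,n},{n+1,n+2}} under some realizable distance function d1 and also return the partition Γ2 = {{1,…,n},{n+1},{n+2}} under some realizable distance function d2. -/
/-!
Let `c` be below every distance of `d1` and `d2` and `D` above all of them. Put the first `n`
points inside `[0, c]` on a line, and the last two points at distance `D` from each other and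
at distance at least `D² / c` from the first `n`. These distances form a Γ₂-transformation of
`d2`, so `f` returns Γ₂ on them; scaled by `c / D` they form a Γ₁-transformation of `d1` (the
last two points move to distance `c`, the first `n` stay at distance at least `D` from them),
so `f` returns Γ₁ on the rescaled configuration, contradicting scale-invariance.
-/

open Finset

/-- `i` and `j` belong to the same cluster of the partition `Γ`. -/
def SameCluster {S : Type*} [Fintype S] [DecidableEq S]
    (Γ : Finpartition (Finset.univ : Finset S)) (i j : S) : Prop :=
  ∃ C ∈ Γ.parts, i ∈ C ∧ j ∈ C

/-- `d'` is a `Γ`-transformation of `d`. -/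
def IsGammaTransform {S : Type*} [Fintype S] [DecidableEq S]
    (Γ : Finpartition (Finset.univ : Finset S)) (d d' : S → S → ℝ) : Prop :=
  (∀ i j, SameCluster Γ i j → d' i j ≤ d i j) ∧
  (∀ i j, ¬ SameCluster Γ i j → d i j ≤ d' i j)

/-- A distance function on `S` is realizable in `ℝ^m` if it is induced by an
injective embedding of `S` into `ℝ^m`. -/
def RealizableIn {S : Type*} (m : ℕ) (d : S → S → ℝ) : Prop :=
  ∃ φ : S → EuclideanSpace ℝ (Fin m), Function.Injective φ ∧
    ∀ i j, d i j = dist (φ i) (φ j)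

/-- Scale-invariance restricted to distance functions realizable in `ℝ^m`. -/
def ScaleInvariantOn {S : Type*} [Fintype S] [DecidableEq S] (m : ℕ)
    (f : (S → S → ℝ) → Finpartition (Finset.univ : Finset S)) : Prop :=
  ∀ d : S → S → ℝ, RealizableIn m d → ∀ α : ℝ, 0 < α →
    RealizableIn m (fun i j => α * d i j) →
    f (fun i j => α * d i j) = f d

/-- Consistency restricted to distance functions realizable in `ℝ^m`. -/
def ConsistentOn {S : Type*} [Fintype S] [DecidableEq S] (m : ℕ)
    (f : (S → S → ℝ) → Finpartition (Finset.univ : Finset S)) : Prop :=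
  ∀ d d' : S → S → ℝ, RealizableIn m d → RealizableIn m d' →
    IsGammaTransform (f d) d d' → f d' = f d


section Realizable

variable {S : Type*} {m : ℕ} {d : S → S → ℝ}

theorem RealizableIn.nonneg (hd : RealizableIn m d) (i j : S) : 0 ≤ d i j := by
  obtain ⟨φ, -, hφ⟩ := hd
  exact hφ i j ▸ dist_nonneg

theorem RealizableIn.pos (hd : RealizableIn m d) {i j : S} (hij : i ≠ j) : 0 < d i j := by
  obtain ⟨φ, hφi, hφ⟩ := hd
  exact hφ i j ▸ dist_pos.2 (hφi.ne hij)

theorem RealizableIn.const_mul (hd : RealizableIn m d) {α : ℝ} (hα : 0 < α) :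
    RealizableIn m (fun i j => α * d i j) := by
  obtain ⟨φ, hφi, hφ⟩ := hd
  refine ⟨fun i => α • φ i, (smul_right_injective _ hα.ne').comp hφi, fun i j => ?_⟩
  rw [dist_smul₀, ← hφ, Real.norm_of_nonneg hα.le]

theorem realizableIn_abs_sub (hm : 0 < m) {x : S → ℝ} (hx : Function.Injective x) :
    RealizableIn m (fun i j => |x i - x j|) := by
  let L := LinearIsometry.toSpanSingleton ℝ (EuclideanSpace ℝ (Fin m))
    (v := EuclideanSpace.single ⟨0, hm⟩ 1) (by simp)
  exact ⟨L ∘ x, L.injective.comp hx, fun i j => by simp [L.isometry.dist_eq, Real.dist_eq]⟩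

theorem exists_common_bounds [Finite S] [Nontrivial S] {d₁ d₂ : S → S → ℝ}
    (h₁ : RealizableIn m d₁) (h₂ : RealizableIn m d₂) :
    ∃ c D : ℝ, 0 < c ∧ c ≤ D ∧ (∀ i j, i ≠ j → c ≤ d₁ i j) ∧ (∀ i j, i ≠ j → c ≤ d₂ i j) ∧
      (∀ i j, d₁ i j ≤ D) ∧ ∀ i j, d₂ i j ≤ D := by
  have : Nonempty {p : S × S // p.1 ≠ p.2} :=
    let ⟨i, j, hij⟩ := exists_pair_ne S
    ⟨⟨(i, j), hij⟩⟩
  obtain ⟨⟨⟨i₀, j₀⟩, h₀⟩, hmin⟩ :=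
    Finite.exists_min fun p : {p : S × S // p.1 ≠ p.2} => min (d₁ p.1.1 p.1.2) (d₂ p.1.1 p.1.2)
  obtain ⟨D, hD⟩ := Finite.exists_le fun p : S × S => max (d₁ p.1 p.2) (d₂ p.1 p.2)
  refine ⟨min (d₁ i₀ j₀) (d₂ i₀ j₀), D, lt_min (h₁.pos h₀) (h₂.pos h₀),
    (min_le_left _ _).trans ((le_max_left _ _).trans (hD (i₀, j₀))),
    fun i j hij => (le_min_iff.1 (hmin ⟨(i, j), hij⟩)).1,
    fun i j hij => (le_min_iff.1 (hmin ⟨(i, j), hij⟩)).2,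
    fun i j => (max_le_iff.1 (hD (i, j))).1, fun i j => (max_le_iff.1 (hD (i, j))).2⟩

end Realizable

theorem eq_of_isGammaTransform_of_const_mul {S : Type*} [Fintype S] [DecidableEq S] {m : ℕ}
    {f : (S → S → ℝ) → Finpartition (Finset.univ : Finset S)}
    (hscale : ScaleInvariantOn m f) (hcons : ConsistentOn m f) {d₁ d₂ d : S → S → ℝ}
    (h₁ : RealizableIn m d₁) (h₂ : RealizableIn m d₂) (hd : RealizableIn m d) {α : ℝ}
    (hα : 0 < α) (ht₂ : IsGammaTransform (f d₂) d₂ d)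
    (ht₁ : IsGammaTransform (f d₁) d₁ (fun i j => α * d i j)) : f d₁ = f d₂ := by
  have hαd := hd.const_mul hα
  calc f d₁ = f (fun i j => α * d i j) := (hcons _ _ h₁ hαd ht₁).symm
    _ = f d := hscale d hd α hα hαd
    _ = f d₂ := hcons _ _ h₂ hd ht₂

section ClusterLine

variable {n : ℕ} {c R D : ℝ} {i j : Fin (n + 2)}

noncomputable def clusterLine (n : ℕ) (c R D : ℝ) (i : Fin (n + 2)) : ℝ :=
  if (i : ℕ) < n then c * i / n else c + R + ((i : ℝ) - n) * D

theorem clusterLine_mem_Icc (hc : 0 ≤ c) (hi : (i : ℕ) < n) :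
    clusterLine n c R D i ∈ Set.Icc 0 c := by
  have hn : (0 : ℝ) < n := Nat.cast_pos.2 (by omega)
  have hin : (i : ℝ) ≤ n := by exact_mod_cast hi.le
  rw [clusterLine, if_pos hi, Set.mem_Icc, div_le_iff₀ hn]
  exact ⟨by positivity, mul_le_mul_of_nonneg_left hin hc⟩

theorem abs_clusterLine_sub_le (hc : 0 ≤ c) (hi : (i : ℕ) < n) (hj : (j : ℕ) < n) :
    |clusterLine n c R D i - clusterLine n c R D j| ≤ c := by
  obtain ⟨hi₀, hic⟩ := clusterLine_mem_Icc (R := R) (D := D) hc hi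
  obtain ⟨hj₀, hjc⟩ := clusterLine_mem_Icc (R := R) (D := D) hc hj
  exact abs_sub_le_of_nonneg_of_le hi₀ hic hj₀ hjc

theorem le_abs_clusterLine_sub (hc : 0 ≤ c) (hD : 0 ≤ D) (hi : (i : ℕ) < n) (hj : n ≤ (j : ℕ)) :
    R ≤ |clusterLine n c R D i - clusterLine n c R D j| := by
  have hxi := (clusterLine_mem_Icc (R := R) (D := D) hc hi).2
  have hjn : (0 : ℝ) ≤ j - n := sub_nonneg.2 (by exact_mod_cast hj)
  have hxj : c + R ≤ clusterLine n c R D j := by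
    rw [clusterLine, if_neg hj.not_gt]
    exact le_add_of_nonneg_right (mul_nonneg hjn hD)
  rw [abs_sub_comm]
  exact (by linarith : R ≤ _).trans (le_abs_self _)

theorem abs_clusterLine_sub_eq (hi : n ≤ (i : ℕ)) (hj : n ≤ (j : ℕ)) (hij : i ≠ j) :
    |clusterLine n c R D i - clusterLine n c R D j| = |D| := by
  have hdiff : |(i : ℝ) - j| = 1 := by
    rcases (by omega : (i : ℕ) = j + 1 ∨ (j : ℕ) = i + 1) with h | h <;> simp [h]
  have hsub : clusterLine n c R D i - clusterLine n c R D j = ((i : ℝ) - j) * D := by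
    rw [clusterLine, clusterLine, if_neg hi.not_gt, if_neg hj.not_gt]
    ring
  rw [hsub, abs_mul, hdiff, one_mul]

theorem min_le_abs_clusterLine_sub (hc : 0 ≤ c) (hD : 0 ≤ D) (hij : i ≠ j)
    (hn : ¬ ((i : ℕ) < n ∧ (j : ℕ) < n)) :
    min R D ≤ |clusterLine n c R D i - clusterLine n c R D j| := by
  rcases lt_or_ge (i : ℕ) n with hi | hi <;> rcases lt_or_ge (j : ℕ) n with hj | hj
  · exact absurd ⟨hi, hj⟩ hn
  · exact (min_le_left _ _).trans (le_abs_clusterLine_sub hc hD hi hj)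
  · rw [abs_sub_comm]
    exact (min_le_left _ _).trans (le_abs_clusterLine_sub hc hD hj hi)
  · rw [abs_clusterLine_sub_eq hi hj hij, abs_of_nonneg hD]
    exact min_le_right _ _

theorem clusterLine_injective (hc : 0 < c) (hR : 0 < R) (hD : 0 < D) :
    Function.Injective (clusterLine n c R D) := by
  intro i j hxij
  by_contra hij
  by_cases hn : (i : ℕ) < n ∧ (j : ℕ) < n
  · rw [clusterLine, clusterLine, if_pos hn.1, if_pos hn.2] at hxij
    have hn₀ : (n : ℝ) ≠ 0 := Nat.cast_ne_zero.2 (by omega)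
    field_simp at hxij
    exact hij (Fin.ext (by exact_mod_cast hxij))
  · have := min_le_abs_clusterLine_sub (R := R) hc.le hD.le hij hn
    rw [hxij, sub_self, abs_zero] at this
    exact (lt_min hR hD).not_ge this

end ClusterLine

section TwoVsThreeClusters

variable {n : ℕ} {Γ : Finpartition (Finset.univ : Finset (Fin (n + 2)))} {i j : Fin (n + 2)}

theorem sameCluster_iff_of_parts_eq_two
    (hΓ : Γ.parts = {Finset.univ.filter (fun i : Fin (n + 2) => (i : ℕ) < n),
      Finset.univ.filter (fun i : Fin (n + 2) => n ≤ (i : ℕ))}) :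
    SameCluster Γ i j ↔ ((i : ℕ) < n ↔ (j : ℕ) < n) := by
  simp only [SameCluster, hΓ, mem_insert, mem_singleton, exists_eq_or_imp, exists_eq_left,
    mem_filter, mem_univ, true_and]
  omega

theorem sameCluster_iff_of_parts_eq_three
    (hΓ : Γ.parts = {Finset.univ.filter (fun i : Fin (n + 2) => (i : ℕ) < n),
      {(⟨n, by omega⟩ : Fin (n + 2))}, {(⟨n + 1, by omega⟩ : Fin (n + 2))}}) :
    SameCluster Γ i j ↔ ((i : ℕ) < n ∧ (j : ℕ) < n) ∨ i = j := by
  simp only [SameCluster, hΓ, mem_insert, mem_singleton, exists_eq_or_imp, exists_eq_left,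
    mem_filter, mem_univ, true_and, Fin.ext_iff]
  omega

variable {c R D α : ℝ} {d : Fin (n + 2) → Fin (n + 2) → ℝ}

theorem isGammaTransform_clusterLine_of_parts_eq_three
    (hΓ : Γ.parts = {Finset.univ.filter (fun i : Fin (n + 2) => (i : ℕ) < n),
      {(⟨n, by omega⟩ : Fin (n + 2))}, {(⟨n + 1, by omega⟩ : Fin (n + 2))}})
    (hc : 0 ≤ c) (hD : 0 ≤ D) (hDR : D ≤ R) (hd₀ : ∀ i, 0 ≤ d i i)
    (hdc : ∀ i j, i ≠ j → c ≤ d i j) (hdD : ∀ i j, d i j ≤ D) :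
    IsGammaTransform Γ d (fun i j => |clusterLine n c R D i - clusterLine n c R D j|) := by
  refine ⟨fun i j hij => ?_, fun i j hij => ?_⟩
  · rcases eq_or_ne i j with rfl | hne
    · simpa using hd₀ i
    obtain ⟨hi, hj⟩ := ((sameCluster_iff_of_parts_eq_three hΓ).1 hij).resolve_right hne
    exact (abs_clusterLine_sub_le hc hi hj).trans (hdc i j hne)
  · rw [sameCluster_iff_of_parts_eq_three hΓ, not_or] at hij
    calc d i j ≤ D := hdD i j
      _ = min R D := (min_eq_right hDR).symm
      _ ≤ _ := min_le_abs_clusterLine_sub hc hD hij.2 hij.1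

theorem isGammaTransform_const_mul_clusterLine_of_parts_eq_two
    (hΓ : Γ.parts = {Finset.univ.filter (fun i : Fin (n + 2) => (i : ℕ) < n),
      Finset.univ.filter (fun i : Fin (n + 2) => n ≤ (i : ℕ))})
    (hc : 0 ≤ c) (hcD : c ≤ D) (hα : 0 ≤ α) (hαD : α * D ≤ c) (hαR : D ≤ α * R)
    (hd₀ : ∀ i, 0 ≤ d i i) (hdc : ∀ i j, i ≠ j → c ≤ d i j) (hdD : ∀ i j, d i j ≤ D) :
    IsGammaTransform Γ d
      (fun i j => α * |clusterLine n c R D i - clusterLine n c R D j|) := by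
  have hD : 0 ≤ D := hc.trans hcD
  refine ⟨fun i j hij => ?_, fun i j hij => ?_⟩
  · rcases eq_or_ne i j with rfl | hne
    · simpa using hd₀ i
    rw [sameCluster_iff_of_parts_eq_two hΓ] at hij
    have hxD : |clusterLine n c R D i - clusterLine n c R D j| ≤ D := by
      by_cases hi : (i : ℕ) < n
      · exact (abs_clusterLine_sub_le hc hi (hij.1 hi)).trans hcD
      · rw [abs_clusterLine_sub_eq (not_lt.1 hi) (not_lt.1 (hi ∘ hij.2)) hne, abs_of_nonneg hD]
    calc _ ≤ α * D := mul_le_mul_of_nonneg_left hxD hα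
      _ ≤ c := hαD
      _ ≤ d i j := hdc i j hne
  · rw [sameCluster_iff_of_parts_eq_two hΓ] at hij
    refine (hdD i j).trans (hαR.trans (mul_le_mul_of_nonneg_left ?_ hα))
    rcases lt_or_ge (i : ℕ) n with hi | hi
    · exact le_abs_clusterLine_sub hc hD hi (by omega)
    · rw [abs_sub_comm]
      exact le_abs_clusterLine_sub hc hD (by omega) hi

end TwoVsThreeClusters

/-- For `n ≥ 1` and `m > 2`, no scale-invariant and consistent clustering function
on the distance functions on `{1,…,n+2}` realizable in `ℝ^m` can return the
partition `{{1,…,n},{n+1,n+2}}` under some realizable distance function and also the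
partition `{{1,…,n},{n+1},{n+2}}` under some realizable distance function. -/
theorem no_two_vs_three_cluster_partitions (n m : ℕ) (hm : 2 < m)
    (f : (Fin (n + 2) → Fin (n + 2) → ℝ) →
      Finpartition (Finset.univ : Finset (Fin (n + 2))))
    (hscale : ScaleInvariantOn m f) (hcons : ConsistentOn m f) :
    ¬ ((∃ d1 : Fin (n + 2) → Fin (n + 2) → ℝ, RealizableIn m d1 ∧
          (f d1).parts =
            {Finset.univ.filter (fun i : Fin (n + 2) => (i : ℕ) < n),
             Finset.univ.filter (fun i : Fin (n + 2) => n ≤ (i : ℕ))}) ∧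
       (∃ d2 : Fin (n + 2) → Fin (n + 2) → ℝ, RealizableIn m d2 ∧
          (f d2).parts =
            {Finset.univ.filter (fun i : Fin (n + 2) => (i : ℕ) < n),
             {(⟨n, by omega⟩ : Fin (n + 2))},
             {(⟨n + 1, by omega⟩ : Fin (n + 2))}})) := by
  rintro ⟨⟨d₁, hd₁, hΓ₁⟩, d₂, hd₂, hΓ₂⟩
  obtain ⟨c, D, hc, hcD, hd₁c, hd₂c, hd₁D, hd₂D⟩ := exists_common_bounds hd₁ hd₂
  have hD : 0 < D := hc.trans_le hcD
  have hα : 0 < c / D := div_pos hc hD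
  have hDR : D ≤ D * D / c := by
    rw [le_div_iff₀ hc]
    exact mul_le_mul_of_nonneg_left hcD hD.le
  have hx : RealizableIn m
      (fun i j => |clusterLine n c (D * D / c) D i - clusterLine n c (D * D / c) D j|) :=
    realizableIn_abs_sub (by omega) (clusterLine_injective hc (hD.trans_le hDR) hD)
  have ht₂ := isGammaTransform_clusterLine_of_parts_eq_three hΓ₂ hc.le hD.le hDR
    (fun i => hd₂.nonneg i i) hd₂c hd₂D
  have ht₁ := isGammaTransform_const_mul_clusterLine_of_parts_eq_two (R := D * D / c) hΓ₁
    hc.le hcD hα.le (div_mul_cancel₀ c hD.ne').le (le_of_eq (by field_simp))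
    (fun i => hd₁.nonneg i i) hd₁c hd₁D
  have hf := eq_of_isGammaTransform_of_const_mul hscale hcons hd₁ hd₂ hx hα ht₂ ht₁
  have hsame := (sameCluster_iff_of_parts_eq_two hΓ₁ (i := ⟨n, by omega⟩)
    (j := ⟨n + 1, by omega⟩)).2 (by simp)
  rw [hf, sameCluster_iff_of_parts_eq_three hΓ₂] at hsame
  simp at hsame
end

section
/- (Uniqueness of perfect ball clustering.) Let X be a finite set of points in ℝ^m and k ≥ 1. If P1 is a perfect ball clustering of X into k clusters with some radius ρ1 > 0 and P2 is a perfect ball clustering of X into k clusters with some radius ρ2 > 0, then P1 = P2. -/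
/-!
Let `ρ₁ ≤ ρ₂`. Two points of one cluster of the first clustering lie in a common ball of
radius `ρ₁`, so they are at distance `< 2ρ₁ ≤ 2ρ₂`; two points of distinct clusters of the
second clustering are at distance `> 4ρ₂ - 2ρ₂ = 2ρ₂` by the triangle inequality through their
centers. Hence the first clustering refines the second, and a refinement with no more parts
than the partition it refines is that partition.
-/

open Finset Metric

/-- `P` is a perfect ball clustering of the finite point set `X ⊆ ℝ^m` into `k`
clusters with radius `ρ`: it has exactly `k` parts and there is an assignment of a
center to each part such that centers of distinct parts are at distance at least
`4ρ` and each part is contained in the open ball of radius `ρ` around its center. -/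
def IsPerfectBallClustering {m : ℕ} [DecidableEq (EuclideanSpace ℝ (Fin m))]
    {X : Finset (EuclideanSpace ℝ (Fin m))} (P : Finpartition X) (k : ℕ) (ρ : ℝ) :
    Prop :=
  P.parts.card = k ∧
  ∃ c : Finset (EuclideanSpace ℝ (Fin m)) → EuclideanSpace ℝ (Fin m),
    (∀ C1 ∈ P.parts, ∀ C2 ∈ P.parts, C1 ≠ C2 → 4 * ρ ≤ dist (c C1) (c C2)) ∧
    (∀ C ∈ P.parts, ∀ p ∈ C, dist p (c C) < ρ)

namespace Finpartition

variable {α : Type*} [DecidableEq α] {s : Finset α} {P Q : Finpartition s}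

theorem le_of_forall_mem_parts (r : α → α → Prop)
    (hP : ∀ C ∈ P.parts, ∀ p ∈ C, ∀ q ∈ C, r p q)
    (hQ : ∀ C ∈ Q.parts, ∀ D ∈ Q.parts, C ≠ D → ∀ p ∈ C, ∀ q ∈ D, ¬ r p q) : P ≤ Q := by
  intro B hB
  obtain ⟨p, hpB⟩ := P.nonempty_of_mem_parts hB
  obtain ⟨C, hC, hpC⟩ := Q.exists_mem (P.le hB hpB)
  refine ⟨C, hC, fun q hqB => ?_⟩
  obtain ⟨D, hD, hqD⟩ := Q.exists_mem (P.le hB hqB)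
  obtain rfl : C = D := by_contra fun hCD => hQ C hC D hD hCD p hpC q hqD (hP B hB p hpB q hqB)
  exact hqD

theorem eq_of_le_of_card_parts_le (hle : P ≤ Q) (hcard : #P.parts ≤ #Q.parts) : P = Q := by
  choose g hg hgle using fun C (hC : C ∈ Q.parts) => exists_le_of_le hle hC
  have hinj : ∀ C₁ C₂ hC₁ hC₂, g C₁ hC₁ = g C₂ hC₂ → C₁ = C₂ := fun C₁ C₂ hC₁ hC₂ h => by
    obtain ⟨x, hx⟩ := P.nonempty_of_mem_parts (hg C₁ hC₁)
    exact Q.eq_of_mem_parts hC₁ hC₂ (hgle _ _ hx) (hgle _ _ (h ▸ hx))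
  have hsurj := surj_on_of_inj_on_of_card_le g hg hinj hcard
  refine le_antisymm hle fun C hC => ⟨g C hC, hg C hC, fun x hx => ?_⟩
  obtain ⟨B, hB, hxB⟩ := P.exists_mem (Q.le hC hx)
  obtain ⟨C', hC', rfl⟩ := hsurj B hB
  obtain rfl := Q.eq_of_mem_parts hC hC' hx (hgle _ _ hxB)
  exact hxB

end Finpartition

section BallClustering

variable {α : Type*} [PseudoMetricSpace α] [DecidableEq α] {s : Finset α} {P : Finpartition s}
  {c : Finset α → α} {ρ : ℝ}

theorem dist_lt_of_mem_part (hball : ∀ C ∈ P.parts, ∀ p ∈ C, dist p (c C) < ρ)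
    {C : Finset α} (hC : C ∈ P.parts) {p q : α} (hp : p ∈ C) (hq : q ∈ C) :
    dist p q < 2 * ρ := by
  linarith [dist_triangle_right p q (c C), hball C hC p hp, hball C hC q hq]

theorem lt_dist_of_mem_distinct_parts
    (hsep : ∀ C ∈ P.parts, ∀ D ∈ P.parts, C ≠ D → 4 * ρ ≤ dist (c C) (c D))
    (hball : ∀ C ∈ P.parts, ∀ p ∈ C, dist p (c C) < ρ)
    {C D : Finset α} (hC : C ∈ P.parts) (hD : D ∈ P.parts) (hCD : C ≠ D)
    {p q : α} (hp : p ∈ C) (hq : q ∈ D) : 2 * ρ < dist p q := by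
  have := dist_triangle4 (c C) p q (c D)
  linarith [hsep C hC D hD hCD, dist_comm p (c C), hball C hC p hp, hball D hD q hq]

end BallClustering

theorem IsPerfectBallClustering.le {m : ℕ} [DecidableEq (EuclideanSpace ℝ (Fin m))]
    {X : Finset (EuclideanSpace ℝ (Fin m))} {P₁ P₂ : Finpartition X} {k₁ k₂ : ℕ} {ρ₁ ρ₂ : ℝ}
    (hρ : ρ₁ ≤ ρ₂) (h₁ : IsPerfectBallClustering P₁ k₁ ρ₁)
    (h₂ : IsPerfectBallClustering P₂ k₂ ρ₂) : P₁ ≤ P₂ := by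
  obtain ⟨-, c₁, -, hball₁⟩ := h₁
  obtain ⟨-, c₂, hsep₂, hball₂⟩ := h₂
  refine Finpartition.le_of_forall_mem_parts (fun p q => dist p q < 2 * ρ₂) ?_ ?_
  · intro C hC p hp q hq
    linarith [dist_lt_of_mem_part hball₁ hC hp hq]
  · intro C hC D hD hCD p hp q hq
    exact (lt_dist_of_mem_distinct_parts hsep₂ hball₂ hC hD hCD hp hq).not_gt

theorem perfect_ball_clustering_unique_general {m : ℕ}
    [DecidableEq (EuclideanSpace ℝ (Fin m))]
    (X : Finset (EuclideanSpace ℝ (Fin m))) (k : ℕ)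
    (P1 P2 : Finpartition X) (ρ1 ρ2 : ℝ)
    (h1 : IsPerfectBallClustering P1 k ρ1) (h2 : IsPerfectBallClustering P2 k ρ2) :
    P1 = P2 := by
  wlog hρ : ρ1 ≤ ρ2 generalizing P1 P2 ρ1 ρ2
  · exact (this P2 P1 ρ2 ρ1 h2 h1 (le_of_not_ge hρ)).symm
  exact Finpartition.eq_of_le_of_card_parts_le (h1.le hρ h2) (h1.1.trans h2.1.symm).le

/-- Uniqueness of perfect ball clustering: two perfect ball clusterings of the same
finite point set into the same number `k` of clusters (possibly with different radii)
coincide. -/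
theorem perfect_ball_clustering_unique {m : ℕ}
    [DecidableEq (EuclideanSpace ℝ (Fin m))]
    (X : Finset (EuclideanSpace ℝ (Fin m))) (k : ℕ) (hk : 1 ≤ k)
    (P1 P2 : Finpartition X) (ρ1 ρ2 : ℝ) (hρ1 : 0 < ρ1) (hρ2 : 0 < ρ2)
    (h1 : IsPerfectBallClustering P1 k ρ1) (h2 : IsPerfectBallClustering P2 k ρ2) :
    P1 = P2 :=
  perfect_ball_clustering_unique_general X k P1 P2 ρ1 ρ2 h1 h2
end
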